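/- arXiv:2010.12897 — 2 statements merged into one kernel-verified Lean document; each statement's English description precedes it below -/
import Mathlib

section
/- Let μ, ρ_t, E, ρ̄ > 0, ε₀ ∈ ℝ, and k ∈ ℤ with k ≠ 0. Both eigenvalues λ± = (2πk)²μ/(2ρ_t) ± (1/2)·√( ((2πk)²μ/ρ_t)² + 4·(2πk)²·E√ρ̄·(ε₀-1)/ρ_t ) (interpreted over ℂ when the discriminant is negative) have non-negative real part if and only if ε₀ ≤ 1. -/
open Real

/-! The real part of the principal square root of a real number `d` is `√d`, which is `0` when
`d < 0`. Hence `Re λ₊ ≥ 0` always and `Re λ₋ = a - √d / 2 ≥ 0` iff `d ≤ (2a)²`, where `a` is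
half the trace; and `d - (2a)²` is a positive multiple of `ε₀ - 1`. -/

theorem Complex.re_ofReal_cpow_half (x : ℝ) : ((x : ℂ) ^ (1 / 2 : ℂ)).re = √x := by
  rw [one_div, cpow_inv_two_re, norm_real, Real.norm_eq_abs, ofReal_re]
  rcases le_total 0 x with hx | hx
  · rw [abs_of_nonneg hx, add_self_div_two]
  · rw [abs_of_nonpos hx, neg_add_cancel, zero_div, Real.sqrt_zero, Real.sqrt_eq_zero'.2 hx]

open Complex in
theorem re_add_sub_cpow_half_nonneg_iff {a : ℝ} (ha : 0 ≤ a) (d : ℝ) :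
    (0 ≤ ((a : ℂ) + (d : ℂ) ^ (1 / 2 : ℂ) / 2).re ∧ 0 ≤ ((a : ℂ) - (d : ℂ) ^ (1 / 2 : ℂ) / 2).re)
      ↔ d ≤ (2 * a) ^ 2 := by
  simp only [add_re, sub_re, ofReal_re, div_ofNat_re, re_ofReal_cpow_half]
  rw [← Real.sqrt_le_left (by positivity)]
  constructor
  · rintro ⟨-, h⟩
    linarith
  · intro h
    constructor <;> linarith [Real.sqrt_nonneg d]

/-- For k ≠ 0, both eigenvalues λ± of the Fourier-mode-k linearization of the 1D
viscoelastic (α = 0) morphoelastic model have non-negative real part iff ε₀ ≤ 1. -/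
theorem stmt_1 (μ ρt E ρbar ε₀ : ℝ) (k : ℤ) (hk : k ≠ 0)
    (hμ : 0 < μ) (hρt : 0 < ρt) (hE : 0 < E) (hρ : 0 < ρbar)
    (d : ℝ)
    (hd : d = ((2 * π * k) ^ 2 * μ / ρt) ^ 2
        + 4 * (2 * π * k) ^ 2 * (E * Real.sqrt ρbar) * (ε₀ - 1) / ρt)
    (lp lm : ℂ)
    (hlp : lp = (((2 * π * k) ^ 2 * μ / (2 * ρt) : ℝ) : ℂ) + (d : ℂ) ^ (1 / 2 : ℂ) / 2)
    (hlm : lm = (((2 * π * k) ^ 2 * μ / (2 * ρt) : ℝ) : ℂ) - (d : ℂ) ^ (1 / 2 : ℂ) / 2) :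
    (0 ≤ lp.re ∧ 0 ≤ lm.re) ↔ ε₀ ≤ 1 := by
  have hk' : (k : ℝ) ≠ 0 := Int.cast_ne_zero.mpr hk
  have hρ' : 0 < √ρbar := Real.sqrt_pos.mpr hρ
  set a : ℝ := (2 * π * k) ^ 2 * μ / (2 * ρt) with ha
  set c : ℝ := 4 * (2 * π * k) ^ 2 * (E * √ρbar) / ρt with hc_def
  have hc : 0 < c := by positivity
  have hd' : d = (2 * a) ^ 2 - c * (1 - ε₀) := by
    rw [hd, ha, hc_def]
    field_simp
    ring
  rw [hlp, hlm, re_add_sub_cpow_half_nonneg_iff (by positivity), hd', sub_le_self_iff,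
    mul_nonneg_iff_of_pos_left hc, sub_nonneg]
end

section
/- Let α > 0 and μ, ρ_t, E, ρ̄ > 0, k ∈ ℤ. The roots of the quadratic λ² - (α + (2πk)²μ/ρ_t)·λ + (2πk)²(αμ + E√ρ̄)/ρ_t = 0 over ℂ both have non-negative real part. -/
open Real

/- A non-real root has real part `b / 2`, the half-sum of the conjugate pair; a negative real
root `x` is impossible since then `x ^ 2 - b * x + c > 0`. -/
lemma Complex.re_nonneg_of_sq_sub_mul_add_eq_zero {b c : ℝ} (hb : 0 ≤ b) (hc : 0 ≤ c) {z : ℂ}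
    (hz : z ^ 2 - b * z + c = 0) : 0 ≤ z.re := by
  have hre : z.re ^ 2 - z.im ^ 2 - b * z.re + c = 0 := by
    simpa [sq] using congrArg Complex.re hz
  have him : z.im * (2 * z.re - b) = 0 := by
    have := congrArg Complex.im hz
    simp only [sq, Complex.add_im, Complex.sub_im, Complex.mul_im, Complex.ofReal_re,
      Complex.ofReal_im, Complex.zero_im] at this
    linarith
  by_contra! hneg
  have hreal : z.im = 0 := (mul_eq_zero.mp him).resolve_right (by linarith)
  rw [hreal] at hre
  nlinarith

theorem stmt_4_general (α μ ρt E ρbar : ℝ) (k : ℤ)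
    (hα : 0 < α) (hμ : 0 < μ) (hρt : 0 < ρt) (hE : 0 < E) :
    ∀ lam : ℂ,
      lam ^ 2 - ((α + (2 * π * k) ^ 2 * μ / ρt : ℝ) : ℂ) * lam
          + (((2 * π * k) ^ 2 * (α * μ + E * Real.sqrt ρbar) / ρt : ℝ) : ℂ) = 0 →
        0 ≤ lam.re := by
  intro lam hroot
  exact Complex.re_nonneg_of_sq_sub_mul_add_eq_zero (by positivity) (by positivity) hroot

/-- For α > 0 and positive parameters, both complex roots of the characteristic
quadratic of the Fourier-mode-k linearization of the 1D morphoelastic model with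
plasticity have non-negative real part. -/
theorem stmt_4 (α μ ρt E ρbar : ℝ) (k : ℤ)
    (hα : 0 < α) (hμ : 0 < μ) (hρt : 0 < ρt) (hE : 0 < E) (hρ : 0 < ρbar) :
    ∀ lam : ℂ,
      lam ^ 2 - ((α + (2 * π * k) ^ 2 * μ / ρt : ℝ) : ℂ) * lam
          + (((2 * π * k) ^ 2 * (α * μ + E * Real.sqrt ρbar) / ρt : ℝ) : ℂ) = 0 →
        0 ≤ lam.re :=
  stmt_4_general α μ ρt E ρbar k hα hμ hρt hE
end
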